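/- Let N be a finitely generated torsion-free nilpotent group with upper central series 1 = ζ₀N < ζ₁N < ... < ζ_kN = N, and let φ be an automorphism of N with induced automorphisms φ̄ᵢ on Aᵢ = ζ_{i+1}N / ζᵢN. If for some i the fixed subgroup Fix(φ̄ᵢ) ⊆ Aᵢ is nontrivial, then R(φ) = ∞. -/

import Mathlib

/-- Elements `a`, `b` are `φ`-twisted conjugate: `∃ x, φ x * a = b * x`,
equivalently `a = (φ x)⁻¹ * b * x`. -/
def TwistedConj {G : Type*} [Group G] (φ : G ≃* G) (a b : G) : Prop :=
  ∃ x : G, φ x * a = b * x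

/-- Twisted conjugacy as a setoid; its quotient's cardinality is the
Reidemeister number `R(φ)`. -/
def twistedSetoid {G : Type*} [Group G] (φ : G ≃* G) : Setoid G where
  r := TwistedConj φ
  iseqv := by
    constructor
    · intro a; exact ⟨1, by simp⟩
    · rintro a b ⟨x, hx⟩
      refine ⟨x⁻¹, ?_⟩
      rw [map_inv]
      have : b = φ x * a * x⁻¹ := by rw [hx]; group
      rw [this]; group
    · rintro a b c ⟨x, hx⟩ ⟨y, hy⟩
      refine ⟨y * x, ?_⟩
      rw [map_mul, mul_assoc, hx, ← mul_assoc, hy, mul_assoc]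

/-!
Choose the largest `j` for which `φ` fixes a nontrivial element of `ζ_{j+1}N / ζ_jN` and pass to
`Q = N / ζ_jN`, whose twisted classes are images of those of `N`. The centre `C = ζ_{j+1}N / ζ_jN`
of `Q` is finitely generated (subgroups of finitely generated nilpotent groups are) and
torsion-free (because `N` is), and `x ↦ φ x * x⁻¹` is an endomorphism of `C` with nontrivial
kernel, so by rank–nullity over `ℤ` its image has infinite index in `C`. By maximality of `j`, `φ`
fixes no nontrivial element of `Q / C`, so central elements of `Q` are twisted conjugate only by
central elements, that is, only when they differ by an element of that image.
-/

open scoped IsMulCommutative commutatorElement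

theorem commutatorElement_pow_left {G : Type*} [Group G] {x g : G} (h : Commute x ⁅x, g⁆)
    (n : ℕ) : ⁅x ^ n, g⁆ = ⁅x, g⁆ ^ n := by
  induction n with
  | zero => simp
  | succ n ih =>
    rw [pow_succ, commutatorElement_mul_left_eq_conj_mul, ih, (h.pow_left n).eq,
      mul_inv_cancel_right, pow_succ']

theorem MonoidHom.infinite_quotient_range_of_not_injective {A : Type*} [CommGroup A] [Group.FG A]
    [IsMulTorsionFree A] (χ : A →* A) (hχ : ¬Function.Injective χ) :
    Infinite (A ⧸ χ.range) := by
  rw [← not_finite_iff_infinite]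
  intro hfin
  set m := Nat.card (A ⧸ χ.range)
  have hm : m ≠ 0 := Nat.card_pos.ne'
  have hpow (x : A) : x ^ m ∈ χ.range := by
    rw [← QuotientGroup.eq_one_iff, QuotientGroup.mk_pow]
    exact pow_card_eq_one'
  let f : Additive A →ₗ[ℤ] Additive A := χ.toAdditive.toIntLinearMap
  -- `x ↦ m • x` embeds `A` into the range of `f`, so `f` has full rank
  let g : Additive A →ₗ[ℤ] f.range :=
    (m • LinearMap.id).codRestrict f.range fun x => hpow x.toMul
  have hg : Function.Injective g := fun x y hxy => by
    simpa [g, hm] using congrArg Subtype.val hxy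
  have hrange := LinearMap.finrank_le_finrank_of_injective hg
  have hker := f.ker.finrank_quotient_add_finrank
  rw [f.quotKerEquivRange.finrank_eq] at hker
  have : f.ker = ⊥ := Submodule.finrank_eq_zero.mp (by have := f.range.finrank_le; omega)
  exact hχ (LinearMap.ker_eq_bot.mp this)

namespace Subgroup

variable {G : Type*} [Group G]

theorem mem_upperCentralSeries_succ_iff_mk_mem_center {n : ℕ} {x : G} :
    x ∈ upperCentralSeries G (n + 1) ↔ (x : G ⧸ upperCentralSeries G n) ∈ center _ := by
  change x ∈ upperCentralSeriesStep (upperCentralSeries G n) ↔ _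
  rw [upperCentralSeriesStep_eq_comap_center]
  rfl

theorem mem_upperCentralSeries_of_pow_mem (htf : ∀ g : G, g ≠ 1 → ¬IsOfFinOrder g) {j n : ℕ}
    (hn : n ≠ 0) {x : G} (hx : x ∈ upperCentralSeries G (j + 1))
    (hxn : x ^ n ∈ upperCentralSeries G j) : x ∈ upperCentralSeries G j := by
  induction j generalizing x with
  | zero =>
    rw [upperCentralSeries_zero, mem_bot] at hxn ⊢
    by_contra hx1
    exact htf x hx1 (isOfFinOrder_iff_pow_eq_one.mpr ⟨n, Nat.pos_of_ne_zero hn, hxn⟩)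
  | succ j ih =>
    rw [mem_upperCentralSeries_succ_iff]
    intro g
    refine ih (mem_upperCentralSeries_succ_iff.mp hx g) ?_
    set π := QuotientGroup.mk' (upperCentralSeries G j)
    have hc : π ⁅x, g⁆ ∈ center _ :=
      mem_upperCentralSeries_succ_iff_mk_mem_center.mp (mem_upperCentralSeries_succ_iff.mp hx g)
    -- modulo `ζ_j`, the commutator `⁅x, g⁆` is central, so `⁅x ^ n, g⁆ ≡ ⁅x, g⁆ ^ n`
    have hcomm : Commute (π x) ⁅π x, π g⁆ := by
      rw [← map_commutatorElement]
      exact mem_center_iff.mp hc (π x)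
    have hpow : π ⁅x ^ n, g⁆ = π (⁅x, g⁆ ^ n) := by
      rw [map_pow, map_commutatorElement, map_commutatorElement, map_pow,
        commutatorElement_pow_left hcomm]
    simpa only [mul_inv_cancel_left] using
      mul_mem (mem_upperCentralSeries_succ_iff.mp hxn g) (QuotientGroup.eq.mp hpow)

theorem isMulTorsionFree_center_quotient_upperCentralSeries
    (htf : ∀ g : G, g ≠ 1 → ¬IsOfFinOrder g) (j : ℕ) :
    IsMulTorsionFree (center (G ⧸ upperCentralSeries G j)) := by
  refine IsMulTorsionFree.of_not_isOfFinOrder fun z hz hfin => hz ?_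
  obtain ⟨n, hn, hzn⟩ := isOfFinOrder_iff_pow_eq_one.mp hfin
  obtain ⟨q, hq⟩ := z
  induction q using QuotientGroup.induction_on with
  | H x =>
    have hxn : x ^ n ∈ upperCentralSeries G j := by
      rw [← QuotientGroup.eq_one_iff, QuotientGroup.mk_pow]
      simpa using congrArg Subtype.val hzn
    refine Subtype.ext ((QuotientGroup.eq_one_iff x).mpr ?_)
    exact mem_upperCentralSeries_of_pow_mem htf hn.ne'
      (mem_upperCentralSeries_succ_iff_mk_mem_center.mpr hq) hxn

theorem FG.of_le_of_isMulCommutative {H K : Subgroup G} [IsMulCommutative H] (hH : H.FG)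
    (hKH : K ≤ H) : K.FG := by
  have : Group.FG H := (Group.fg_iff_subgroup_fg H).mpr hH
  have hK : (K.subgroupOf H).FG := by
    have := IsNoetherian.noetherian (AddSubgroup.toIntSubmodule (K.subgroupOf H).toAddSubgroup)
    rwa [Submodule.fg_iff_addSubgroup_fg, AddSubgroup.toIntSubmodule_toAddSubgroup,
      ← fg_iff_add_fg] at this
  have : Group.FG (K.subgroupOf H) := (Group.fg_iff_subgroup_fg _).mpr hK
  exact (Group.fg_iff_subgroup_fg K).mp <|
    Group.fg_of_surjective (f := (subgroupOfEquivOfLe hKH).toMonoidHom)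
      (subgroupOfEquivOfLe hKH).surjective

theorem FG.of_inf_of_map {K M : Subgroup G} [M.Normal] (hKM : (K ⊓ M).FG)
    (hK : (K.map (QuotientGroup.mk' M)).FG) : K.FG := by
  classical
  obtain ⟨T, hT⟩ := hK
  have hlift : ∀ t ∈ T, ∃ k ∈ K, (k : G ⧸ M) = t := fun t ht =>
    (hT ▸ subset_closure ht : t ∈ K.map (QuotientGroup.mk' M))
  choose! lift hliftK hlift using hlift
  set L := closure (lift '' T)
  have hLK : L ≤ K := (closure_le _).mpr (by rintro _ ⟨t, ht, rfl⟩; exact hliftK t ht)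
  have hmap : K.map (QuotientGroup.mk' M) ≤ L.map (QuotientGroup.mk' M) := by
    rw [← hT, closure_le]
    intro t ht
    exact ⟨lift t, subset_closure ⟨t, ht, rfl⟩, hlift t ht⟩
  suffices K = L ⊔ (K ⊓ M) by
    rw [this]
    exact FG.sup ⟨T.image lift, by rw [Finset.coe_image]⟩ hKM
  refine le_antisymm (fun k hk => ?_) (sup_le hLK inf_le_left)
  obtain ⟨l, hl, hlk⟩ := hmap ⟨k, hk, rfl⟩
  have hlk' : l⁻¹ * k ∈ K ⊓ M :=
    mem_inf.mpr ⟨mul_mem (inv_mem (hLK hl)) hk, QuotientGroup.eq.mp hlk⟩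
  simpa using mul_mem_sup hl hlk'

theorem normal_of_commutator_top_le {D : Subgroup G} (h : ⁅D, ⊤⁆ ≤ D) : D.Normal where
  conj_mem x hx g := by
    have hc : ⁅x⁻¹, g⁆ ∈ D := h (commutator_mem_commutator (inv_mem hx) (mem_top g))
    convert mul_mem hx hc using 1
    simp only [commutatorElement_def]
    group

theorem mem_upperCentralSeriesStep_of_forall_mem {D : Subgroup G} [D.Normal] {S : Set G}
    (hS : closure S = ⊤) {x : G} (hx : ∀ s ∈ S, ⁅x, s⁆ ∈ D) : x ∈ D.upperCentralSeriesStep := by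
  rw [upperCentralSeriesStep_eq_comap_center, mem_comap, ← centralizer_univ, ← coe_top,
    ← map_top_of_surjective _ (QuotientGroup.mk'_surjective D), ← hS, MonoidHom.map_closure,
    centralizer_closure]
  rintro _ ⟨s, hs, rfl⟩
  have := (QuotientGroup.eq_one_iff _).mpr (hx s hs)
  rw [← QuotientGroup.mk'_apply, map_commutatorElement,
    commutatorElement_eq_one_iff_mul_comm] at this
  exact this.symm

theorem exists_finset_lowerCentralSeries_le_closure_sup [Group.FG G] (n : ℕ) :
    ∃ T : Finset G, (T : Set G) ⊆ lowerCentralSeries (⊤ : Subgroup G) n ∧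
      lowerCentralSeries ⊤ n ≤ closure (T : Set G) ⊔ lowerCentralSeries ⊤ (n + 1) := by
  classical
  obtain ⟨S, hS⟩ := Group.FG.out (G := G)
  induction n with
  | zero => exact ⟨S, by simp, by simp [hS]⟩
  | succ n ih =>
    obtain ⟨T, hTγ, hγT⟩ := ih
    let T' := (T ×ˢ S).image fun p => ⁅p.1, p.2⁆
    have hT'γ : (T' : Set G) ⊆ lowerCentralSeries (⊤ : Subgroup G) (n + 1) := by
      simp only [T', Finset.coe_image, Set.image_subset_iff]
      rintro ⟨t, s⟩ hts
      exact commutator_mem_commutator (hTγ (Finset.mem_product.mp hts).1) (mem_top s)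
    set D := closure (T' : Set G) ⊔ lowerCentralSeries ⊤ (n + 2)
    have hDγ : D ≤ lowerCentralSeries ⊤ (n + 1) :=
      sup_le ((closure_le _).mpr hT'γ) (lowerCentralSeries_antitone _ (Nat.le_succ _))
    have : D.Normal := normal_of_commutator_top_le <|
      (commutator_mono hDγ le_rfl).trans le_sup_right
    -- `γ_n` is central modulo `D` because its generators `T` (modulo `γ_{n+1}`) commute there
    -- with the generators `S` of `G`
    have hγ : lowerCentralSeries ⊤ n ≤ D.upperCentralSeriesStep := by
      refine hγT.trans (sup_le ((closure_le _).mpr fun t ht => ?_) fun u hu => ?_)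
      · refine mem_upperCentralSeriesStep_of_forall_mem hS fun s hs => mem_sup_left ?_
        exact subset_closure (Finset.mem_image.mpr ⟨(t, s), Finset.mem_product.mpr ⟨ht, hs⟩, rfl⟩)
      · exact (mem_upperCentralSeriesStep _ _).mpr fun g =>
          mem_sup_right (commutator_mem_commutator hu (mem_top g))
    refine ⟨T', hT'γ, commutator_le.mpr fun u hu g _ => ?_⟩
    exact (mem_upperCentralSeriesStep _ _).mp (hγ hu) g

instance isMulCommutative_map_lowerCentralSeries (n : ℕ) :
    IsMulCommutative ((lowerCentralSeries ⊤ n).map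
      (QuotientGroup.mk' (lowerCentralSeries (⊤ : Subgroup G) (n + 1)))) := by
  refine ⟨⟨?_⟩⟩
  rintro ⟨_, a, ha, rfl⟩ ⟨_, b, -, rfl⟩
  refine Subtype.ext ?_
  rw [coe_mul, coe_mul, ← commutatorElement_eq_one_iff_mul_comm, ← map_commutatorElement,
    QuotientGroup.mk'_apply, QuotientGroup.eq_one_iff]
  exact commutator_mem_commutator ha (mem_top b)

theorem fg_map_lowerCentralSeries [Group.FG G] (n : ℕ) :
    ((lowerCentralSeries ⊤ n).map
      (QuotientGroup.mk' (lowerCentralSeries (⊤ : Subgroup G) (n + 1)))).FG := by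
  classical
  obtain ⟨T, hTγ, hγT⟩ := exists_finset_lowerCentralSeries_le_closure_sup (G := G) n
  refine ⟨T.image (QuotientGroup.mk' _), ?_⟩
  rw [Finset.coe_image, ← MonoidHom.map_closure]
  refine le_antisymm (map_mono ((closure_le _).mpr hTγ)) ?_
  rwa [map_le_iff_le_comap, comap_map_eq, QuotientGroup.ker_mk']

theorem fg_of_isNilpotent [Group.IsNilpotent G] [Group.FG G] (H : Subgroup G) : H.FG := by
  obtain ⟨c, hc⟩ := nilpotent_iff_lowerCentralSeries.mp ‹Group.IsNilpotent G›
  suffices ∀ d n, c ≤ n + d → ∀ K ≤ lowerCentralSeries ⊤ n, K.FG from this c 0 (by simp) H le_top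
  intro d
  induction d with
  | zero =>
    intro n hn K hK
    rw [le_bot_iff.mp (hK.trans (hc ▸ lowerCentralSeries_antitone _ hn))]
    exact FG.bot
  | succ d ih =>
    intro n hn K hK
    exact FG.of_inf_of_map (ih (n + 1) (by omega) _ inf_le_right)
      (FG.of_le_of_isMulCommutative (fg_map_lowerCentralSeries n) (map_mono hK))

def HasNontrivialFixedPointOnUpperCentralFactor (φ : G ≃* G) (m : ℕ) : Prop :=
  ∃ b ∈ upperCentralSeries G (m + 1), b ∉ upperCentralSeries G m ∧
    φ b * b⁻¹ ∈ upperCentralSeries G m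

theorem exists_greatest_hasNontrivialFixedPointOnUpperCentralFactor [Group.IsNilpotent G]
    {φ : G ≃* G} {i : ℕ} (hi : HasNontrivialFixedPointOnUpperCentralFactor φ i) :
    ∃ j, HasNontrivialFixedPointOnUpperCentralFactor φ j ∧
      ∀ m, HasNontrivialFixedPointOnUpperCentralFactor φ m → m ≤ j := by
  obtain ⟨k, hk⟩ := Group.IsNilpotent.nilpotent G
  have hbdd : BddAbove {m | HasNontrivialFixedPointOnUpperCentralFactor φ m} := by
    refine ⟨k, fun m ⟨b, _, hb, _⟩ => ?_⟩
    by_contra! hkm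
    exact hb (upperCentralSeries_mono G hkm.le (hk ▸ mem_top b))
  exact ⟨_, Nat.sSup_mem ⟨i, hi⟩ hbdd, fun m hm => le_csSup hbdd hm⟩

theorem mem_upperCentralSeries_of_mul_inv_mem [Group.IsNilpotent G] {φ : G ≃* G} {j : ℕ}
    (hj : ∀ m, HasNontrivialFixedPointOnUpperCentralFactor φ m → m < j) {x : G}
    (hx : φ x * x⁻¹ ∈ upperCentralSeries G j) : x ∈ upperCentralSeries G j := by
  obtain ⟨k, hk⟩ := Group.IsNilpotent.nilpotent G
  suffices ∀ d, x ∈ upperCentralSeries G (j + d) → x ∈ upperCentralSeries G j from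
    this k (upperCentralSeries_mono G (Nat.le_add_left k j) (hk ▸ mem_top x))
  intro d
  induction d with
  | zero => exact id
  | succ d ih =>
    refine fun hxd => ih (of_not_not fun hx' => ?_)
    have := hj (j + d) ⟨x, hxd, hx', upperCentralSeries_mono G (Nat.le_add_right j d) hx⟩
    omega

end Subgroup

section TwistedConjugacy

open Subgroup

theorem TwistedConj.map {G H : Type*} [Group G] [Group H] {φ : G ≃* G} {ψ : H ≃* H}
    (f : G →* H) (hfφ : ∀ g, f (φ g) = ψ (f g)) {a b : G} (h : TwistedConj φ a b) :
    TwistedConj ψ (f a) (f b) := by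
  obtain ⟨x, hx⟩ := h
  exact ⟨f x, by rw [← hfφ, ← map_mul, hx, map_mul]⟩

theorem infinite_quotient_twistedSetoid_of_surjective {G H : Type*} [Group G] [Group H]
    {φ : G ≃* G} {ψ : H ≃* H} (f : G →* H) (hf : Function.Surjective f)
    (hfφ : ∀ g, f (φ g) = ψ (f g)) [Infinite (Quotient (twistedSetoid ψ))] :
    Infinite (Quotient (twistedSetoid φ)) := by
  refine Infinite.of_surjective (Quotient.map' f fun _ _ => TwistedConj.map f hfφ :
    Quotient (twistedSetoid φ) → Quotient (twistedSetoid ψ)) ?_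
  rintro ⟨h⟩
  obtain ⟨g, rfl⟩ := hf h
  exact ⟨⟦g⟧, rfl⟩

theorem twistedConj_iff_of_mem_center {G : Type*} [Group G] (φ : G ≃* G) {a : G}
    (ha : a ∈ center G) (b : G) : TwistedConj φ a b ↔ ∃ x, φ x * x⁻¹ = a⁻¹ * b := by
  refine exists_congr fun x => ?_
  rw [mem_center_iff.mp ha (φ x), ← eq_inv_mul_iff_mul_eq, mul_inv_eq_iff_eq_mul, mul_assoc]

theorem infinite_quotient_twistedSetoid_of_center {G : Type*} [Group G] (ψ : G ≃* G)
    [Group.FG (center G)] [IsMulTorsionFree (center G)] {z : G} (hz : z ∈ center G) (hz1 : z ≠ 1)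
    (hψz : ψ z = z) (hfix : ∀ x, ψ x * x⁻¹ ∈ center G → x ∈ center G) :
    Infinite (Quotient (twistedSetoid ψ)) := by
  have hψ (x : center G) : ψ x ∈ center G := by
    refine mem_center_iff.mpr fun g => ?_
    rw [← ψ.apply_symm_apply g, ← map_mul, ← map_mul, mem_center_iff.mp x.2]
  let χ : center G →* center G :=
    ((ψ : G →* G).comp (center G).subtype).codRestrict _ hψ / MonoidHom.id _
  have hχ (x : center G) : (χ x : G) = ψ x * (x : G)⁻¹ := by
    simp only [χ, div_eq_mul_inv]
    rfl
  have : Infinite (center G ⧸ χ.range) := by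
    refine χ.infinite_quotient_range_of_not_injective fun hinj => hz1 ?_
    have : χ ⟨z, hz⟩ = χ 1 := Subtype.ext (by rw [hχ, map_one]; simp [hψz])
    exact congrArg Subtype.val (hinj this)
  refine Infinite.of_injective (Quotient.map' (fun a : center G => (a : G)) ?_ :
    center G ⧸ χ.range → Quotient (twistedSetoid ψ)) ?_
  · intro a b hab
    obtain ⟨x, hx⟩ := QuotientGroup.leftRel_apply.mp hab
    exact (twistedConj_iff_of_mem_center ψ a.2 b).mpr ⟨x, by rw [← hχ, hx]; rfl⟩
  · rintro ⟨a⟩ ⟨b⟩ hab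
    obtain ⟨x, hx⟩ := (twistedConj_iff_of_mem_center ψ a.2 b).mp (Quotient.exact hab)
    have hxc : x ∈ center G := hfix x (hx ▸ mul_mem (inv_mem a.2) b.2)
    exact QuotientGroup.eq.mpr ⟨⟨x, hxc⟩, Subtype.ext (by rw [hχ]; exact hx)⟩

end TwistedConjugacy

/-- `N` finitely generated torsion-free nilpotent, `φ` an
automorphism; if the automorphism induced on some upper central factor
`Aᵢ = ζ_{i+1}N ⧸ ζᵢN` has a nontrivial fixed point (i.e. there is
`a ∈ ζ_{i+1}N \ ζᵢN` with `φ a * a⁻¹ ∈ ζᵢN`), then `R(φ) = ∞`. -/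
theorem stmt15 {N : Type*} [Group N] [Group.IsNilpotent N]
    (hFG : Group.FG N) (htf : ∀ g : N, g ≠ 1 → ¬IsOfFinOrder g)
    (φ : N ≃* N) (i : ℕ) (a : N)
    (ha1 : a ∈ upperCentralSeries N (i + 1))
    (ha2 : a ∉ upperCentralSeries N i)
    (hfix : φ a * a⁻¹ ∈ upperCentralSeries N i) :
    Infinite (Quotient (twistedSetoid φ)) := by
  have : Group.FG N := hFG
  obtain ⟨j, ⟨b, hb1, hb2, hbfix⟩, hj⟩ :=
    Subgroup.exists_greatest_hasNontrivialFixedPointOnUpperCentralFactor ⟨a, ha1, ha2, hfix⟩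
  set Z := Subgroup.upperCentralSeries N j
  let ψ : N ⧸ Z ≃* N ⧸ Z :=
    QuotientGroup.congr Z Z φ (Subgroup.characteristic_iff_map_eq.mp inferInstance φ)
  have hψ (x : N) : ψ x = (φ x : N ⧸ Z) := QuotientGroup.congr_mk _ _ _ _ x
  have hcenter {x : N} :
      (x : N ⧸ Z) ∈ Subgroup.center _ ↔ x ∈ Subgroup.upperCentralSeries N (j + 1) :=
    Subgroup.mem_upperCentralSeries_succ_iff_mk_mem_center.symm
  have hψb : ψ b = b := by
    rw [hψ, QuotientGroup.eq_iff_div_mem, div_eq_mul_inv]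
    exact hbfix
  have hψfix (x : N ⧸ Z) (hx : ψ x * x⁻¹ ∈ Subgroup.center _) : x ∈ Subgroup.center _ := by
    induction x using QuotientGroup.induction_on with
    | H x =>
      rw [hψ, ← QuotientGroup.mk_inv, ← QuotientGroup.mk_mul, hcenter] at hx
      exact hcenter.mpr (Subgroup.mem_upperCentralSeries_of_mul_inv_mem
        (fun m hm => Nat.lt_succ_of_le (hj m hm)) hx)
  have : Group.FG (Subgroup.center (N ⧸ Z)) :=
    (Group.fg_iff_subgroup_fg _).mpr (Subgroup.fg_of_isNilpotent _)
  have := Subgroup.isMulTorsionFree_center_quotient_upperCentralSeries htf j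
  have : Infinite (Quotient (twistedSetoid ψ)) :=
    infinite_quotient_twistedSetoid_of_center ψ (hcenter.mpr hb1)
      (mt (QuotientGroup.eq_one_iff b).mp hb2) hψb hψfix
  exact infinite_quotient_twistedSetoid_of_surjective (QuotientGroup.mk' Z)
    (QuotientGroup.mk'_surjective Z) fun x => (hψ x).symm
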